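/- arXiv:math/0610625 — 3 statements merged into one kernel-verified Lean document; each statement's English description precedes it below -/
import Mathlib

section
/- For t > 0, the partial derivative ∂Ψ_ε(t)/∂ε evaluated at ε = 0 equals ψ(t) := e^{-t}/√(πt) + 2Φ(√(2t)), where 1 - Ψ_ε(t) = Φ(-√(2t) - ε/√(2t)) + e^{-2ε} Φ(√(2t) - ε/√(2t)) and Φ is the standard normal CDF. -/
open MeasureTheory Real

/-- The standard normal cumulative distribution function. -/
noncomputable def Phi (x : ℝ) : ℝ := ∫ y in Set.Iic x, Real.exp (-y ^ 2 / 2) / Real.sqrt (2 * Real.pi)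

/-- `Psi ε t` is the probability that a pair of left-right coalescing Brownian motions
started at distance `ε` apart has not met by time `t`. -/
noncomputable def Psi (ε t : ℝ) : ℝ :=
  1 - Phi (-Real.sqrt (2 * t) - ε / Real.sqrt (2 * t))
    - Real.exp (-2 * ε) * Phi (Real.sqrt (2 * t) - ε / Real.sqrt (2 * t))

/-- `psi t` is the density of the branching-coalescing point set of the Brownian net. -/
noncomputable def psi (t : ℝ) : ℝ :=
  Real.exp (-t) / Real.sqrt (Real.pi * t) + 2 * Phi (Real.sqrt (2 * t))

/-
The derivative of `Φ(±√(2t) - ε/√(2t))` at `ε = 0` is `-e^{-t}/(√(2π) √(2t)) = -e^{-t}/(2√(πt))`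
for both signs, and the product rule on `e^{-2ε} Φ(√(2t) - ε/√(2t))` contributes `-2Φ(√(2t))`;
the two Gaussian terms add up to `e^{-t}/√(πt)`.
-/

theorem hasDerivAt_integral_Iic {E : Type*} [NormedAddCommGroup E] [NormedSpace ℝ E]
    [CompleteSpace E] {f : ℝ → E} (hf : Continuous f) (hfi : Integrable f) (x : ℝ) :
    HasDerivAt (fun u => ∫ y in Set.Iic u, f y) (f x) x := by
  have hsplit : ∀ u, ∫ y in Set.Iic u, f y = (∫ y in Set.Iic 0, f y) + ∫ y in (0 : ℝ)..u, f y :=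
    fun u => by
      rw [← intervalIntegral.integral_Iic_sub_Iic hfi.integrableOn hfi.integrableOn]
      abel
  rw [funext hsplit]
  exact (hf.integral_hasStrictDerivAt 0 x).hasDerivAt.const_add _

theorem integrable_gaussian_density :
    Integrable fun y : ℝ => Real.exp (-y ^ 2 / 2) / Real.sqrt (2 * Real.pi) := by
  convert (integrable_exp_neg_mul_sq (b := 1 / 2) (by norm_num)).div_const _ using 3
  ring_nf

theorem hasDerivAt_Phi (x : ℝ) :
    HasDerivAt Phi (Real.exp (-x ^ 2 / 2) / Real.sqrt (2 * Real.pi)) x :=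
  hasDerivAt_integral_Iic (by fun_prop) integrable_gaussian_density x

theorem hasDerivAt_Phi_sub_div (a c ε : ℝ) :
    HasDerivAt (fun ε => Phi (a - ε / c))
      (-(Real.exp (-(a - ε / c) ^ 2 / 2) / Real.sqrt (2 * Real.pi)) / c) ε := by
  have hlin : HasDerivAt (fun ε => a - ε / c) (-(1 / c)) ε :=
    ((hasDerivAt_id ε).div_const c).const_sub a
  exact ((hasDerivAt_Phi _).comp ε hlin).congr_deriv (by ring)

theorem sqrt_two_mul_pi_mul_sqrt_two_mul (t : ℝ) :
    Real.sqrt (2 * Real.pi) * Real.sqrt (2 * t) = 2 * Real.sqrt (Real.pi * t) := by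
  rw [← Real.sqrt_mul (by positivity), show 2 * Real.pi * (2 * t) = 2 ^ 2 * (Real.pi * t) by ring,
    Real.sqrt_mul (by norm_num), Real.sqrt_sq (by norm_num)]

theorem exp_neg_div_sqrt_pi_mul (t : ℝ) :
    Real.exp (-t) / Real.sqrt (Real.pi * t) =
      2 * (Real.exp (-(2 * t) / 2) / Real.sqrt (2 * Real.pi) / Real.sqrt (2 * t)) := by
  rw [show -(2 * t) / 2 = -t by ring, div_div, sqrt_two_mul_pi_mul_sqrt_two_mul]
  ring

/-- The partial derivative of `Psi ε t` in `ε` at `ε = 0` equals `psi t`. -/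
theorem hasDerivAt_Psi_zero : ∀ t : ℝ, 0 < t →
    HasDerivAt (fun ε : ℝ => Psi ε t) (psi t) 0 := by
  intro t ht
  set c := Real.sqrt (2 * t)
  have hc : c ^ 2 = 2 * t := Real.sq_sqrt (by positivity)
  have hexp : HasDerivAt (fun ε : ℝ => Real.exp (-2 * ε)) (-2) 0 := by
    simpa using ((hasDerivAt_id (0 : ℝ)).const_mul (-2)).exp
  refine (((hasDerivAt_Phi_sub_div (-c) c 0).const_sub 1).fun_sub
    (hexp.fun_mul (hasDerivAt_Phi_sub_div c c 0))).congr_deriv ?_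
  simp only [psi, zero_div, sub_zero, neg_sq, hc, mul_zero, Real.exp_zero, exp_neg_div_sqrt_pi_mul]
  ring
end

section
/- For every t > 0, e^{-t}/√(πt) + 2Φ(√(2t)) > 2, where Φ is the standard normal CDF; moreover ψ(t) := e^{-t}/√(πt) + 2Φ(√(2t)) tends to 2 as t → ∞ and ψ(t)·√(πt) tends to 1 as t → 0⁺. -/
open MeasureTheory Real Filter

/-!
Since `1 - Φ(x) = (2π)^{-1/2} ∫_x^∞ e^{-y²/2} dy`, the inequality `ψ(t) > 2` is, at `x = √(2t)`,
the Mills ratio bound `∫_x^∞ e^{-y²/2} dy < e^{-x²/2}/x`, which follows by integrating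
`e^{-y²/2} < (y/x) e^{-y²/2}` over `y > x`. Both limits then only need `0 ≤ Φ ≤ 1`.
-/

open Set Topology

lemma setIntegral_pos_of_forall_pos {X : Type*} [MeasurableSpace X] {μ : Measure X}
    {s : Set X} {f : X → ℝ} (hs : MeasurableSet s) (hμs : μ s ≠ 0)
    (hf : ∀ x ∈ s, 0 < f x) (hfi : IntegrableOn f s μ) : 0 < ∫ x in s, f x ∂μ := by
  have hsupp : Function.support f ∩ s = s := inter_eq_right.mpr fun x hx => (hf x hx).ne'
  rw [setIntegral_pos_iff_support_of_nonneg_ae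
    (ae_restrict_of_forall_mem hs fun x hx => (hf x hx).le) hfi, hsupp]
  exact pos_iff_ne_zero.mpr hμs

lemma integrable_exp_neg_sq_div_two : Integrable fun y : ℝ => exp (-y ^ 2 / 2) := by
  convert integrable_exp_neg_mul_sq (b := 1 / 2) (by norm_num) using 3
  ring

lemma integral_exp_neg_sq_div_two : ∫ y : ℝ, exp (-y ^ 2 / 2) = √(2 * π) := by
  rw [show 2 * π = π / (1 / 2) by ring, ← integral_gaussian]
  congr 1 with y
  ring_nf

lemma integrable_mul_exp_neg_sq_div_two : Integrable fun y : ℝ => y * exp (-y ^ 2 / 2) := by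
  convert integrable_mul_exp_neg_mul_sq (b := 1 / 2) (by norm_num) using 4
  ring

lemma integral_Ioi_mul_exp_neg_sq_div_two (x : ℝ) :
    ∫ y in Ioi x, y * exp (-y ^ 2 / 2) = exp (-x ^ 2 / 2) := by
  have hderiv (y : ℝ) : HasDerivAt (fun y : ℝ => -exp (-y ^ 2 / 2)) (y * exp (-y ^ 2 / 2)) y := by
    have hsq : HasDerivAt (fun y : ℝ => -y ^ 2 / 2) (-y) y := by
      simpa using ((hasDerivAt_pow 2 y).neg.div_const 2).congr_deriv
        (show _ = -y by push_cast; ring)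
    exact hsq.exp.neg.congr_deriv (by ring)
  have hlim : Tendsto (fun y : ℝ => -exp (-y ^ 2 / 2)) atTop (𝓝 0) := by
    simpa using (tendsto_exp_atBot.comp <|
      (tendsto_neg_atBot_iff.mpr (tendsto_pow_atTop two_ne_zero)).atBot_div_const two_pos).neg
  simpa using integral_Ioi_of_hasDerivAt_of_tendsto' (fun y _ => hderiv y)
    integrable_mul_exp_neg_sq_div_two.integrableOn hlim

lemma integral_Ioi_exp_neg_sq_div_two_lt {x : ℝ} (hx : 0 < x) :
    ∫ y in Ioi x, exp (-y ^ 2 / 2) < exp (-x ^ 2 / 2) / x := by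
  have hmom : IntegrableOn (fun y : ℝ => y * exp (-y ^ 2 / 2) / x) (Ioi x) :=
    (integrable_mul_exp_neg_sq_div_two.div_const x).integrableOn
  have hexp : IntegrableOn (fun y : ℝ => exp (-y ^ 2 / 2)) (Ioi x) :=
    integrable_exp_neg_sq_div_two.integrableOn
  have hpos : 0 < ∫ y in Ioi x, (y * exp (-y ^ 2 / 2) / x - exp (-y ^ 2 / 2)) := by
    refine setIntegral_pos_of_forall_pos measurableSet_Ioi (by simp) (fun y hy => ?_)
      (hmom.sub hexp)
    rw [sub_pos, mul_div_right_comm]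
    exact lt_mul_of_one_lt_left (exp_pos _) ((one_lt_div hx).mpr hy)
  rwa [integral_sub hmom hexp, integral_div, integral_Ioi_mul_exp_neg_sq_div_two, sub_pos] at hpos

lemma one_sub_Phi (x : ℝ) : 1 - Phi x = (∫ y in Ioi x, exp (-y ^ 2 / 2)) / √(2 * π) := by
  have hsplit := intervalIntegral.integral_Iic_add_Ioi (b := x)
    integrable_exp_neg_sq_div_two.integrableOn integrable_exp_neg_sq_div_two.integrableOn
  rw [integral_exp_neg_sq_div_two] at hsplit
  have hpi : √(2 * π) ≠ 0 := by positivity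
  rw [Phi, integral_div, sub_eq_iff_eq_add, ← add_div, add_comm, hsplit, div_self hpi]

lemma Phi_nonneg (x : ℝ) : 0 ≤ Phi x :=
  setIntegral_nonneg measurableSet_Iic fun _ _ => by positivity

lemma Phi_le_one (x : ℝ) : Phi x ≤ 1 := by
  have : 0 ≤ 1 - Phi x := by
    rw [one_sub_Phi]
    exact div_nonneg (setIntegral_nonneg measurableSet_Ioi fun _ _ => (exp_pos _).le)
      (sqrt_nonneg _)
  linarith

lemma one_sub_Phi_lt {x : ℝ} (hx : 0 < x) : 1 - Phi x < exp (-x ^ 2 / 2) / (x * √(2 * π)) := by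
  rw [one_sub_Phi, ← div_div]
  gcongr
  exact integral_Ioi_exp_neg_sq_div_two_lt hx

lemma two_lt_psi {t : ℝ} (ht : 0 < t) : 2 < psi t := by
  have hsq : √(2 * t) ^ 2 = 2 * t := sq_sqrt (by positivity)
  have hprod : √(2 * t) * √(2 * π) = 2 * √(π * t) := by
    rw [← sqrt_mul (by positivity), show 2 * t * (2 * π) = 2 ^ 2 * (π * t) by ring,
      sqrt_mul (by positivity), sqrt_sq zero_le_two]
  have hlt := one_sub_Phi_lt (x := √(2 * t)) (by positivity)
  rw [hsq, hprod, show -(2 * t) / 2 = -t by ring] at hlt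
  have : exp (-t) / (2 * √(π * t)) * 2 = exp (-t) / √(π * t) := by field_simp
  rw [psi]
  linarith

lemma psi_le_two_add (t : ℝ) : psi t ≤ 2 + exp (-t) / √(π * t) := by
  have := Phi_le_one √(2 * t)
  rw [psi]
  linarith

lemma tendsto_psi_atTop : Tendsto psi atTop (𝓝 2) := by
  have hsqrt : Tendsto (fun t => √(π * t)) atTop atTop :=
    tendsto_sqrt_atTop.comp (tendsto_id.const_mul_atTop pi_pos)
  have hupper : Tendsto (fun t => 2 + exp (-t) / √(π * t)) atTop (𝓝 2) := by
    simpa using tendsto_const_nhds.add (tendsto_exp_neg_atTop_nhds_zero.div_atTop hsqrt)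
  refine tendsto_of_tendsto_of_tendsto_of_le_of_le' tendsto_const_nhds hupper ?_
    (Eventually.of_forall psi_le_two_add)
  filter_upwards [eventually_gt_atTop 0] with t ht using (two_lt_psi ht).le

lemma psi_mul_sqrt_pi_mul {t : ℝ} (ht : 0 < t) :
    psi t * √(π * t) = exp (-t) + 2 * Phi √(2 * t) * √(π * t) := by
  have : √(π * t) ≠ 0 := by positivity
  rw [psi, add_mul, div_mul_cancel₀ _ this]

lemma tendsto_psi_mul_sqrt_nhdsGT_zero :
    Tendsto (fun t => psi t * √(π * t)) (𝓝[>] 0) (𝓝 1) := by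
  have hexp : Tendsto (fun t : ℝ => exp (-t)) (𝓝[>] 0) (𝓝 1) := by
    simpa using (continuous_neg.rexp.tendsto 0).mono_left nhdsWithin_le_nhds
  have hsqrt : Tendsto (fun t : ℝ => √(π * t)) (𝓝[>] 0) (𝓝 0) := by
    simpa using ((continuous_const.mul continuous_id).sqrt.tendsto 0).mono_left
      nhdsWithin_le_nhds
  have hbdd : IsBoundedUnder (· ≤ ·) (𝓝[>] 0) fun t : ℝ => ‖2 * Phi √(2 * t)‖ := by
    refine isBoundedUnder_of ⟨2, fun t => ?_⟩
    rw [norm_mul, Real.norm_of_nonneg (Phi_nonneg _)]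
    simpa using Phi_le_one √(2 * t)
  have hlim := hexp.add (isBoundedUnder_le_mul_tendsto_zero hbdd hsqrt)
  rw [add_zero] at hlim
  exact hlim.congr' (eventually_nhdsWithin_of_forall fun t ht => (psi_mul_sqrt_pi_mul ht).symm)

theorem psi_gt_two_and_asymptotics :
    (∀ t : ℝ, 0 < t → 2 < psi t) ∧
    Tendsto psi atTop (nhds 2) ∧
    Tendsto (fun t => psi t * Real.sqrt (Real.pi * t)) (nhdsWithin 0 (Set.Ioi 0)) (nhds 1) :=
  ⟨fun _ => two_lt_psi, tendsto_psi_atTop, tendsto_psi_mul_sqrt_nhdsGT_zero⟩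
end

section
/- For t > 0 and ε > 0, ∫_{-ε/√2}^∞ e^{√2 y - t}/√(2πt) · (∫_{ε/√2}^∞ (2(2x+y)/t) e^{-(2x+y)²/(2t)} dx) dy + ∫_{-∞}^{-ε/√2} e^{√2 y - t}/√(2πt) · (∫_{-y}^∞ (2(2x+y)/t) e^{-(2x+y)²/(2t)} dx) dy = Φ(-√(2t) - ε/√(2t)) + e^{-2ε} Φ(√(2t) - ε/√(2t)), where Φ is the standard normal CDF. -/
/-!
With `u = 2x + y` the inner integrand `(2u/t) e^{-u²/(2t)}` is the `x`-derivative of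
`-e^{-u²/(2t)}`, so the inner integral from `a` is `e^{-(2a+y)²/(2t)}`. Multiplied by the Girsanov
factor `e^{√2 y - t}` this completes a square in `y`, leaving a Gaussian density of variance `t`:
with mean `√2 (t - ε)` and an extra factor `e^{-2ε}` on the first range, with mean `√2 t` on the
second. Their tail integrals are the two values of `Φ`.
-/

open MeasureTheory Real

open Set Filter Topology

theorem integral_Iic_comp_sub_div {E : Type*} [NormedAddCommGroup E] [NormedSpace ℝ E]
    (g : ℝ → E) (c μ : ℝ) {s : ℝ} (hs : 0 < s) :
    ∫ y in Iic c, g ((y - μ) / s) = s • ∫ z in Iic ((c - μ) / s), g z := by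
  have hmem : ∀ y, (y - μ) / s ∈ Iic ((c - μ) / s) ↔ y ∈ Iic c := fun y => by
    simp only [mem_Iic, div_le_div_iff_of_pos_right hs, sub_le_sub_iff_right]
  have hind : (Iic c).indicator (fun y => g ((y - μ) / s))
      = fun y => (Iic ((c - μ) / s)).indicator g ((y - μ) / s) := by
    ext y
    by_cases hy : y ∈ Iic c
    · rw [indicator_of_mem hy, indicator_of_mem ((hmem y).2 hy)]
    · rw [indicator_of_notMem hy, indicator_of_notMem (mt (hmem y).1 hy)]
  rw [← integral_indicator measurableSet_Iic, hind, ← integral_indicator measurableSet_Iic,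
    integral_sub_right_eq_self (μ := volume) (fun y => (Iic ((c - μ) / s)).indicator g (y / s)) μ,
    Measure.integral_comp_div, abs_of_pos hs]

theorem integral_Iic_gaussian (c μ : ℝ) {v : ℝ} (hv : 0 < v) :
    ∫ y in Iic c, exp (-(y - μ) ^ 2 / (2 * v)) / √(2 * π * v) = Phi ((c - μ) / √v) := by
  have hsv : 0 < √v := sqrt_pos.2 hv
  have hintegrand : ∀ y, exp (-(y - μ) ^ 2 / (2 * v)) / √(2 * π * v)
      = (exp (-((y - μ) / √v) ^ 2 / 2) / √(2 * π)) / √v := fun y => by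
    rw [div_pow, sq_sqrt hv.le, sqrt_mul (by positivity) v, div_div]
    ring_nf
  simp_rw [hintegrand]
  rw [integral_div, integral_Iic_comp_sub_div (fun z => exp (-z ^ 2 / 2) / √(2 * π)) c μ hsv,
    smul_eq_mul, Phi, mul_div_cancel_left₀ _ hsv.ne']

theorem integral_Ici_gaussian (c μ : ℝ) {v : ℝ} (hv : 0 < v) :
    ∫ y in Ici c, exp (-(y - μ) ^ 2 / (2 * v)) / √(2 * π * v) = Phi ((μ - c) / √v) := by
  have hreflect : ∀ y, exp (-(y - μ) ^ 2 / (2 * v)) / √(2 * π * v)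
      = exp (-(-y - -μ) ^ 2 / (2 * v)) / √(2 * π * v) := fun y => by ring_nf
  simp_rw [integral_Ici_eq_integral_Ioi, hreflect]
  rw [integral_comp_neg_Ioi (f := fun y => exp (-(y - -μ) ^ 2 / (2 * v)) / √(2 * π * v)),
    integral_Iic_gaussian _ _ hv, neg_sub_neg]

theorem integral_Ici_mul_exp_neg_sq_div (a b : ℝ) {t : ℝ} (ht : 0 < t) (hab : 0 ≤ 2 * a + b) :
    ∫ x in Ici a, (2 * (2 * x + b) / t) * exp (-(2 * x + b) ^ 2 / (2 * t))
      = exp (-(2 * a + b) ^ 2 / (2 * t)) := by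
  have hderiv : ∀ x ∈ Ici a, HasDerivAt (fun x => -exp (-(2 * x + b) ^ 2 / (2 * t)))
      ((2 * (2 * x + b) / t) * exp (-(2 * x + b) ^ 2 / (2 * t))) x := fun x _ => by
    have hexponent : HasDerivAt (fun x => -(2 * x + b) ^ 2 / (2 * t))
        (-(2 * (2 * x + b) * 2) / (2 * t)) x := by
      simpa using (((hasDerivAt_id' x).const_mul 2).add_const b).fun_pow 2 |>.neg.div_const (2 * t)
    exact hexponent.exp.neg.congr_deriv (by ring)
  have hnonneg : ∀ x ∈ Ioi a, 0 ≤ (2 * (2 * x + b) / t) * exp (-(2 * x + b) ^ 2 / (2 * t)) :=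
    fun x hx => by
      have : 0 ≤ 2 * x + b := by linarith [mem_Ioi.1 hx]
      positivity
  have hsq : Tendsto (fun x => (2 * x + b) ^ 2 / (2 * t)) atTop atTop :=
    ((tendsto_pow_atTop two_ne_zero).comp (tendsto_atTop_add_const_right _ b
      (tendsto_id.const_mul_atTop two_pos))).atTop_div_const (by positivity)
  have hlim : Tendsto (fun x => -exp (-(2 * x + b) ^ 2 / (2 * t))) atTop (𝓝 0) := by
    simpa [neg_div] using (tendsto_exp_atBot.comp (tendsto_neg_atTop_atBot.comp hsq)).neg
  rw [integral_Ici_eq_integral_Ioi, integral_Ioi_of_hasDerivAt_of_nonneg' hderiv hnonneg hlim]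
  ring

theorem integral_Ici_meeting_term {t ε : ℝ} (ht : 0 < t) (hε : 0 < ε) :
    ∫ y in Ici (-ε / √2), (exp (√2 * y - t) / √(2 * π * t)) *
        ∫ x in Ici (ε / √2), (2 * (2 * x + y) / t) * exp (-(2 * x + y) ^ 2 / (2 * t))
      = exp (-2 * ε) * Phi (√(2 * t) - ε / √(2 * t)) := by
  have h2 : √2 ^ 2 = 2 := sq_sqrt zero_le_two
  have hpos : 0 < ε / √2 := by positivity
  have hpoint : ∀ y ∈ Ici (-ε / √2), (exp (√2 * y - t) / √(2 * π * t)) *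
        ∫ x in Ici (ε / √2), (2 * (2 * x + y) / t) * exp (-(2 * x + y) ^ 2 / (2 * t))
      = exp (-2 * ε) * (exp (-(y - √2 * (t - ε)) ^ 2 / (2 * t)) / √(2 * π * t)) := by
    intro y hy
    rw [mem_Ici, neg_div] at hy
    have hsquare : √2 * y - t + -(2 * (ε / √2) + y) ^ 2 / (2 * t)
        = -2 * ε + -(y - √2 * (t - ε)) ^ 2 / (2 * t) := by
      field_simp
      linear_combination ((√2 ^ 2 + 2) * (t - ε) ^ 2 + 2 * √2 * y * ε - 2 * t ^ 2 + 4 * t * ε) * h2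
    rw [integral_Ici_mul_exp_neg_sq_div _ _ ht (by linarith), div_mul_eq_mul_div, ← exp_add,
      hsquare, exp_add, mul_div_assoc]
  have hmean : (√2 * (t - ε) - -ε / √2) / √t = √(2 * t) - ε / √(2 * t) := by
    have : 0 < √t := sqrt_pos.2 ht
    have hst : √t ^ 2 = t := sq_sqrt ht.le
    rw [sqrt_mul zero_le_two]
    field_simp
    linear_combination (-ε) * h2 - √2 ^ 2 * hst
  rw [setIntegral_congr_fun measurableSet_Ici hpoint, integral_const_mul,
    integral_Ici_gaussian _ _ ht, hmean]

theorem integral_Iic_meeting_term {t ε : ℝ} (ht : 0 < t) (hε : 0 < ε) :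
    ∫ y in Iic (-ε / √2), (exp (√2 * y - t) / √(2 * π * t)) *
        ∫ x in Ici (-y), (2 * (2 * x + y) / t) * exp (-(2 * x + y) ^ 2 / (2 * t))
      = Phi (-√(2 * t) - ε / √(2 * t)) := by
  have h2 : √2 ^ 2 = 2 := sq_sqrt zero_le_two
  have hpos : 0 < ε / √2 := by positivity
  have hpoint : ∀ y ∈ Iic (-ε / √2), (exp (√2 * y - t) / √(2 * π * t)) *
        ∫ x in Ici (-y), (2 * (2 * x + y) / t) * exp (-(2 * x + y) ^ 2 / (2 * t))
      = exp (-(y - √2 * t) ^ 2 / (2 * t)) / √(2 * π * t) := by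
    intro y hy
    rw [mem_Iic, neg_div] at hy
    have hsquare : √2 * y - t + -(2 * -y + y) ^ 2 / (2 * t) = -(y - √2 * t) ^ 2 / (2 * t) := by
      field_simp
      linear_combination t ^ 2 * h2
    rw [integral_Ici_mul_exp_neg_sq_div _ _ ht (by linarith), div_mul_eq_mul_div, ← exp_add,
      hsquare]
  have hmean : (-ε / √2 - √2 * t) / √t = -√(2 * t) - ε / √(2 * t) := by
    have : 0 < √t := sqrt_pos.2 ht
    have hst : √t ^ 2 = t := sq_sqrt ht.le
    rw [sqrt_mul zero_le_two]
    field_simp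
    linear_combination √2 ^ 2 * hst
  rw [setIntegral_congr_fun measurableSet_Iic hpoint, integral_Iic_gaussian _ _ ht, hmean]

/-- The explicit computation of the probability `P[T_ε < t]` that two left-right Brownian
paths started at distance `ε` apart meet before time `t` (Lemma 6.2 of the paper). -/
theorem meeting_probability_integral : ∀ t ε : ℝ, 0 < t → 0 < ε →
    (∫ y in Set.Ici (-ε / Real.sqrt 2),
        (Real.exp (Real.sqrt 2 * y - t) / Real.sqrt (2 * Real.pi * t)) *
          ∫ x in Set.Ici (ε / Real.sqrt 2),
            (2 * (2 * x + y) / t) * Real.exp (-(2 * x + y) ^ 2 / (2 * t)))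
    + (∫ y in Set.Iic (-ε / Real.sqrt 2),
        (Real.exp (Real.sqrt 2 * y - t) / Real.sqrt (2 * Real.pi * t)) *
          ∫ x in Set.Ici (-y),
            (2 * (2 * x + y) / t) * Real.exp (-(2 * x + y) ^ 2 / (2 * t)))
      = Phi (-Real.sqrt (2 * t) - ε / Real.sqrt (2 * t))
        + Real.exp (-2 * ε) * Phi (Real.sqrt (2 * t) - ε / Real.sqrt (2 * t)) := by
  intro t ε ht hε
  rw [integral_Ici_meeting_term ht hε, integral_Iic_meeting_term ht hε, add_comm]
end
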